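/- arXiv:1607.05357 — 2 statements merged into one kernel-verified Lean document; each statement's English description precedes it below -/
import Mathlib

section
/- Let Ω ⊂ ℝ² be a bounded smooth domain. Then there exist r₀ = r₀(∂Ω) > 0 and a universal constant c₀ > 0 such that for every x₀ ∈ ∂Ω and every 0 < r ≤ r₀, the half-ball B_r⁺(x₀) = B_r(x₀) ∩ Ω is star-shaped with respect to some center a ∈ B_r⁺(x₀) in the quantitative sense that (x − a)·ν ≥ c₀ r for all x ∈ ∂B_r⁺(x₀), where ν is the outward unit normal of ∂B_r⁺(x₀). -/
open MeasureTheory Metric Filter Topology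
open scoped ENNReal Topology

noncomputable section

/-- The plane `ℝ²`. -/
abbrev Plane : Type := EuclideanSpace ℝ (Fin 2)

/-- The ambient Euclidean space `ℝ^L` of the target manifold `N`. -/
abbrev Tgt (L : ℕ) : Type := EuclideanSpace ℝ (Fin L)

/-- Standard basis vectors of the plane. -/
def stdB (i : Fin 2) : Plane := EuclideanSpace.single i (1 : ℝ)

variable {L : ℕ}

/-- `i`-th partial derivative of a map `u : ℝ² → ℝ^L`. -/
def pd (u : Plane → Tgt L) (i : Fin 2) (x : Plane) : Tgt L := fderiv ℝ u x (stdB i)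

/-- `|∇u|²`, the energy density of `u`. -/
def gradSq (u : Plane → Tgt L) (x : Plane) : ℝ := ∑ i, ‖pd u i x‖ ^ 2

/-- `|∇²u|²`, squared norm of the Hessian of `u`. -/
def hessSq (u : Plane → Tgt L) (x : Plane) : ℝ := ∑ i, ∑ j, ‖fderiv ℝ (pd u i) x (stdB j)‖ ^ 2

/-- The Laplacian of `u : ℝ² → ℝ^L`. -/
def lapl (u : Plane → Tgt L) (x : Plane) : Tgt L := ∑ i, fderiv ℝ (pd u i) x (stdB i)

/-- One–dimensional Hausdorff measure, used as boundary measure on `∂Ω`. -/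
def bdryM : Measure Plane := μH[1]

/-- `u ∈ H¹(Ω, ℝ^L)`: `u` and its first derivatives are in `L²(Ω)`. -/
def MemH1 (Ω : Set Plane) (u : Plane → Tgt L) : Prop :=
  MemLp u 2 (volume.restrict Ω) ∧ ∀ i, MemLp (pd u i) 2 (volume.restrict Ω)

/-- `u ∈ H²(Ω, ℝ^L)`. -/
def MemH2 (Ω : Set Plane) (u : Plane → Tgt L) : Prop :=
  MemH1 Ω u ∧ ∀ i j, MemLp (fun x => fderiv ℝ (pd u i) x (stdB j)) 2 (volume.restrict Ω)

/-- `u` maps `Ω` into `N` (a.e.). -/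
def AEMapsInto (Ω : Set Plane) (u : Plane → Tgt L) (N : Set (Tgt L)) : Prop :=
  ∀ᵐ x ∂(volume.restrict Ω), u x ∈ N

/-- Weak (distributional) solution of `Δu + A(u)(∇u,∇u) = τ` in `Ω`. -/
def IsWeakSol (Ω : Set Plane) (A : Tgt L → (Plane →L[ℝ] Tgt L) → Tgt L)
    (u τ : Plane → Tgt L) : Prop :=
  ∀ φ : Plane → Tgt L, ContDiff ℝ (⊤ : ℕ∞) φ → HasCompactSupport φ → tsupport φ ⊆ Ω →
    ∫ x in Ω,
        ((inner ℝ (A (u x) (fderiv ℝ u x)) (φ x) : ℝ)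
          - ∑ i, (inner ℝ (pd u i x) (pd φ i x) : ℝ))
      = ∫ x in Ω, (inner ℝ (τ x) (φ x) : ℝ)

/-- Weak solution of `Δu + A(u)(∇u,∇u) = τ` in `Ω` together with the weak anchoring
(Robin-type) boundary condition `∂u/∂ν + w ℙ(u)(u - g) = 0` on `∂Ω`, in the weak
formulation tested against all smooth test functions (not vanishing on `∂Ω`). -/
def IsWeakAnchorSol (Ω : Set Plane) (A : Tgt L → (Plane →L[ℝ] Tgt L) → Tgt L)
    (P : Tgt L → Tgt L →L[ℝ] Tgt L) (w : ℝ) (g : Plane → Tgt L)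
    (u τ : Plane → Tgt L) : Prop :=
  ∀ φ : Plane → Tgt L, ContDiff ℝ (⊤ : ℕ∞) φ →
    (∫ x in Ω,
        ((inner ℝ (A (u x) (fderiv ℝ u x)) (φ x) : ℝ)
          - ∑ i, (inner ℝ (pd u i x) (pd φ i x) : ℝ)))
      + w * ∫ x in frontier Ω, (inner ℝ (P (u x) (u x - g x)) (φ x) : ℝ) ∂bdryM
      = ∫ x in Ω, (inner ℝ (τ x) (φ x) : ℝ)

/-- The (squared) `H^{1/2}` norm of `g` on a subset `E` of the boundary, via the
Gagliardo seminorm with respect to 1-dimensional Hausdorff measure. -/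
def h12NormSq (E : Set Plane) (g : Plane → Tgt L) : ℝ :=
  (∫ x in E, ‖g x‖ ^ 2 ∂bdryM) +
    ∫ x in E, (∫ y in E, ‖g x - g y‖ ^ 2 / dist x y ^ 2 ∂bdryM) ∂bdryM

/-- The Morrey norm `‖f‖_{M^{1,a}(Ω)}`. -/
def morrey1Norm (a : ℝ) (Ω : Set Plane) (f : Plane → Tgt L) : ℝ :=
  sSup {m : ℝ | ∃ x : Plane, ∃ r : ℝ, 0 < r ∧ ball x r ⊆ Ω ∧
    m = r ^ (a - 2) * ∫ y in ball x r, ‖f y‖}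

/-- `f` has Morrey norm `M^{1,a}(Ω)` bounded by `C`. -/
def Morrey1Bound (a : ℝ) (Ω : Set Plane) (f : Plane → Tgt L) (C : ℝ) : Prop :=
  ∀ x : Plane, ∀ r : ℝ, 0 < r → ball x r ⊆ Ω →
    r ^ (a - 2) * (∫ y in ball x r, ‖f y‖) ≤ C

/-- The `L log L(Ω)` norm `∫_Ω |f| log (2 + |f|)`. -/
def logLNorm (Ω : Set Plane) (f : Plane → Tgt L) : ℝ :=
  ∫ x in Ω, ‖f x‖ * Real.log (2 + ‖f x‖)

/-- The oscillation of `u` over a set `E`. -/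
def oscOn (E : Set Plane) (u : Plane → Tgt L) : ℝ :=
  sSup {d : ℝ | ∃ x ∈ E, ∃ y ∈ E, d = ‖u x - u y‖}

/-- Rotation by `π/2` in the plane, turning a normal vector into a tangent vector. -/
def rot (v : Plane) : Plane :=
  EuclideanSpace.single 0 (-(v 1)) + EuclideanSpace.single 1 (v 0)

/-- The outward unit normal of `Ω = {F < 0}` computed from the defining function `F`. -/
def outN (F : Plane → ℝ) (x : Plane) : Plane := ‖gradient F x‖⁻¹ • gradient F x

/-- `Ω` is a bounded domain with smooth boundary, presented as the sublevel set of a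
smooth defining function `F` with nonvanishing gradient on `∂Ω`. -/
def SmoothBdd (Ω : Set Plane) (F : Plane → ℝ) : Prop :=
  IsOpen Ω ∧ Bornology.IsBounded Ω ∧ ContDiff ℝ (⊤ : ℕ∞) F ∧ Ω = {x | F x < 0} ∧
    ∀ x ∈ frontier Ω, gradient F x ≠ 0


/-- `g ∈ H^{1/2}(E, ℝ^L)` for `E ⊆ ∂Ω`: the `L²` part and the Gagliardo double
integral are finite. -/
def MemH12 (E : Set Plane) (g : Plane → Tgt L) : Prop :=
  MemLp g 2 (bdryM.restrict E) ∧
    Integrable (fun p : Plane × Plane => ‖g p.1 - g p.2‖ ^ 2 / dist p.1 p.2 ^ 2)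
      ((bdryM.restrict E).prod (bdryM.restrict E))

/-- Normalizations of two vectors of norm `≥ m` differ by at most `2‖a-b‖/m`. -/
lemma unit_diff_le {E : Type*} [NormedAddCommGroup E] [InnerProductSpace ℝ E]
    (a b : E) {m : ℝ} (hm : 0 < m) (ha : m ≤ ‖a‖) (hb : m ≤ ‖b‖) :
    ‖‖a‖⁻¹ • a - ‖b‖⁻¹ • b‖ ≤ 2 * ‖a - b‖ / m := by
  have ha0 : (0:ℝ) < ‖a‖ := lt_of_lt_of_le hm ha
  have hb0 : (0:ℝ) < ‖b‖ := lt_of_lt_of_le hm hb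
  have key : ‖a‖⁻¹ • a - ‖b‖⁻¹ • b = ‖a‖⁻¹ • (a - b) + (‖a‖⁻¹ - ‖b‖⁻¹) • b := by
    rw [smul_sub, sub_smul]; abel
  have h1 : ‖‖a‖⁻¹ • (a - b)‖ ≤ ‖a - b‖ / m := by
    rw [norm_smul, Real.norm_eq_abs, abs_of_pos (inv_pos.2 ha0), div_eq_inv_mul]
    exact mul_le_mul_of_nonneg_right (inv_anti₀ hm ha) (norm_nonneg _)
  have h2 : ‖(‖a‖⁻¹ - ‖b‖⁻¹) • b‖ ≤ ‖a - b‖ / m := by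
    rw [norm_smul, Real.norm_eq_abs]
    have hd : ‖a‖⁻¹ - ‖b‖⁻¹ = (‖b‖ - ‖a‖) / (‖a‖ * ‖b‖) := by
      field_simp
    rw [hd, abs_div, abs_of_pos (mul_pos ha0 hb0)]
    have habs : |‖b‖ - ‖a‖| ≤ ‖a - b‖ := by
      rw [norm_sub_rev]; exact abs_norm_sub_norm_le b a
    rw [div_mul_eq_mul_div, div_le_div_iff₀ (mul_pos ha0 hb0) hm]
    have h5 : |‖b‖ - ‖a‖| * ‖b‖ ≤ ‖a - b‖ * ‖b‖ :=
      mul_le_mul_of_nonneg_right habs (le_of_lt hb0)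
    have h6 : |‖b‖ - ‖a‖| * ‖b‖ * m ≤ ‖a - b‖ * ‖b‖ * m :=
      mul_le_mul_of_nonneg_right h5 (le_of_lt hm)
    have h7 : ‖a - b‖ * ‖b‖ * m ≤ ‖a - b‖ * ‖b‖ * ‖a‖ :=
      mul_le_mul_of_nonneg_left ha (mul_nonneg (norm_nonneg _) (le_of_lt hb0))
    calc |‖b‖ - ‖a‖| * ‖b‖ * m ≤ ‖a - b‖ * ‖b‖ * ‖a‖ := le_trans h6 h7
      _ = ‖a - b‖ * (‖a‖ * ‖b‖) := by ring
  calc ‖‖a‖⁻¹ • a - ‖b‖⁻¹ • b‖ ≤ ‖‖a‖⁻¹ • (a - b)‖ + ‖(‖a‖⁻¹ - ‖b‖⁻¹) • b‖ := by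
        rw [key]; exact norm_add_le _ _
    _ ≤ ‖a - b‖ / m + ‖a - b‖ / m := add_le_add h1 h2
    _ = 2 * ‖a - b‖ / m := by ring

set_option maxHeartbeats 2000000 in
/-- quantitative star-shapedness of boundary half-balls, (2.5):
for a bounded smooth domain `Ω ⊆ ℝ²` there are `r₀ > 0` and a universal `c₀ > 0` such
that each half ball `B_r⁺(x₀)`, `x₀ ∈ ∂Ω`, `0 < r ≤ r₀`, is star-shaped with respect
to some center `a ∈ B_r⁺(x₀)`: `(x - a) · ν ≥ c₀ r` along the whole boundary
`∂B_r⁺(x₀)`, i.e. along its circular portion (where `ν` is the radial direction) and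
along its flat portion on `∂Ω` (where `ν` is the outward normal of `∂Ω`). -/
theorem half_ball_star_shaped
    (Ω : Set Plane) (F : Plane → ℝ) (hΩ : SmoothBdd Ω F) :
    ∃ r₀ > (0:ℝ), ∃ c₀ > (0:ℝ),
      ∀ x₀ ∈ frontier Ω, ∀ r : ℝ, 0 < r → r ≤ r₀ →
        ∃ a ∈ ball x₀ r ∩ Ω,
          -- circular portion of `∂B_r⁺(x₀)`, with outward normal `(x - x₀)/r`
          (∀ x ∈ sphere x₀ r ∩ closure Ω,
            c₀ * r ≤ (inner ℝ (x - a) (r⁻¹ • (x - x₀)) : ℝ))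
          -- flat portion of `∂B_r⁺(x₀)` on `∂Ω`, with outward normal `ν`
          ∧ ∀ x ∈ closedBall x₀ r ∩ frontier Ω,
            c₀ * r ≤ (inner ℝ (x - a) (outN F x) : ℝ) := by
  obtain ⟨hopen, hbdd, hF, hΩeq, hgrad⟩ := hΩ
  by_cases hne : (frontier Ω).Nonempty
  swap
  · exact ⟨1, one_pos, 1, one_pos, fun x₀ hx₀ => absurd ⟨x₀, hx₀⟩ hne⟩
  have hFd : Differentiable ℝ F := hF.differentiable (by simp)
  -- the gradient and its basic properties
  have hGi : ∀ (x v : Plane), (inner ℝ (gradient F x) v : ℝ) = fderiv ℝ F x v := fun x v =>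
    InnerProductSpace.toDual_symm_apply
  have hGcont : Continuous (gradient F) :=
    (InnerProductSpace.toDual ℝ Plane).symm.continuous.comp (hF.continuous_fderiv (by simp))
  -- F vanishes on the frontier
  have hF0 : ∀ x ∈ frontier Ω, F x = 0 := by
    intro x hx
    have hsub : frontier {b : Plane | F b < (fun _ => (0:ℝ)) b} ⊆
        {b : Plane | F b = (fun _ => (0:ℝ)) b} :=
      frontier_lt_subset_eq hF.continuous continuous_const
    have : x ∈ frontier {b : Plane | F b < 0} := by rwa [← hΩeq]
    exact hsub this
  -- compactness of the frontier and minimum of the gradient norm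
  have hKc : IsCompact (frontier Ω) :=
    isCompact_of_isClosed_isBounded isClosed_frontier
      (hbdd.closure.subset frontier_subset_closure)
  obtain ⟨z, hzK, hzmin⟩ := hKc.exists_isMinOn hne (hGcont.norm.continuousOn)
  set m : ℝ := ‖gradient F z‖ with hmdef
  have hm0 : 0 < m := norm_pos_iff.2 (hgrad z hzK)
  have hm : ∀ x ∈ frontier Ω, m ≤ ‖gradient F x‖ := fun x hx => hzmin hx
  -- a big ball containing everything
  obtain ⟨R₁, hR₁⟩ := hbdd.closure.subset_closedBall 0
  set S : Set Plane := closedBall (0:Plane) (R₁ + 2) with hSdef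
  -- bound on the second derivative
  have hD1 : ContDiff ℝ (⊤ : ℕ∞) (fderiv ℝ F) := hF.fderiv_right (by simp)
  obtain ⟨C, hC⟩ := (isCompact_closedBall (0:Plane) (R₁+2)).exists_bound_of_continuousOn
    (hD1.continuous_fderiv (by simp)).continuousOn
  set M : ℝ := max C 1 with hMdef
  have hM1 : (1:ℝ) ≤ M := le_max_right _ _
  have hM0 : (0:ℝ) < M := lt_of_lt_of_le one_pos hM1
  -- Lipschitz bound for the first derivative on S
  have hLip : ∀ x ∈ S, ∀ y ∈ S, ‖fderiv ℝ F y - fderiv ℝ F x‖ ≤ M * ‖y - x‖ := by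
    intro x hx y hy
    exact (convex_closedBall _ _).norm_image_sub_le_of_norm_fderiv_le
      (fun z _ => (hD1.differentiable (by simp)) z)
      (fun z hz => (hC z hz).trans (le_max_left _ _)) hx hy
  have hGlip : ∀ x ∈ S, ∀ y ∈ S, ‖gradient F y - gradient F x‖ ≤ M * ‖y - x‖ := by
    intro x hx y hy
    have : gradient F y - gradient F x
        = (InnerProductSpace.toDual ℝ Plane).symm (fderiv ℝ F y - fderiv ℝ F x) := by
      simp [gradient]
    rw [this, LinearIsometryEquiv.norm_map]
    exact hLip x hx y hy
  -- Taylor estimate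
  have hTay : ∀ x₀ ∈ closedBall (0:Plane) (R₁+1), ∀ x : Plane, ‖x - x₀‖ ≤ 1 →
      |F x - F x₀ - fderiv ℝ F x₀ (x - x₀)| ≤ M * ‖x - x₀‖ ^ 2 := by
    intro x₀ hx₀ x hx
    have hx₀n : ‖x₀‖ ≤ R₁ + 1 := mem_closedBall_zero_iff.1 hx₀
    have hsS : closedBall x₀ ‖x - x₀‖ ⊆ S := by
      intro y hy
      rw [hSdef, mem_closedBall_zero_iff]
      have h1 : ‖y - x₀‖ ≤ ‖x - x₀‖ := mem_closedBall_iff_norm.1 hy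
      calc ‖y‖ = ‖y - x₀ + x₀‖ := by rw [sub_add_cancel]
        _ ≤ ‖y - x₀‖ + ‖x₀‖ := norm_add_le _ _
        _ ≤ R₁ + 2 := by linarith
    have hx₀S : x₀ ∈ S := by
      rw [hSdef, mem_closedBall_zero_iff]; linarith
    set φ : Plane → ℝ := fun y => F y - fderiv ℝ F x₀ y with hφdef
    have hφd : ∀ y : Plane, DifferentiableAt ℝ φ y := fun y =>
      (hFd y).sub (fderiv ℝ F x₀).differentiableAt
    have hφf : ∀ y : Plane, fderiv ℝ φ y = fderiv ℝ F y - fderiv ℝ F x₀ := by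
      intro y
      rw [hφdef]
      rw [fderiv_fun_sub (hFd y) (fderiv ℝ F x₀).differentiableAt, (fderiv ℝ F x₀).fderiv]
    have hbound : ∀ y ∈ closedBall x₀ ‖x - x₀‖, ‖fderiv ℝ φ y‖ ≤ M * ‖x - x₀‖ := by
      intro y hy
      rw [hφf y]
      calc ‖fderiv ℝ F y - fderiv ℝ F x₀‖ ≤ M * ‖y - x₀‖ := hLip x₀ hx₀S y (hsS hy)
        _ ≤ M * ‖x - x₀‖ :=
          mul_le_mul_of_nonneg_left (mem_closedBall_iff_norm.1 hy) (le_of_lt hM0)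
    have hkey := (convex_closedBall x₀ ‖x - x₀‖).norm_image_sub_le_of_norm_fderiv_le
      (fun z _ => hφd z) hbound (mem_closedBall_self (norm_nonneg _))
      (mem_closedBall_iff_norm.2 le_rfl)
    have hval : φ x - φ x₀ = F x - F x₀ - fderiv ℝ F x₀ (x - x₀) := by
      rw [hφdef]; simp only [map_sub]; ring
    calc |F x - F x₀ - fderiv ℝ F x₀ (x - x₀)| = ‖φ x - φ x₀‖ := by
          rw [hval, Real.norm_eq_abs]
      _ ≤ M * ‖x - x₀‖ * ‖x - x₀‖ := hkey
      _ = M * ‖x - x₀‖ ^ 2 := by ring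
  -- choice of constants
  refine ⟨min 1 (m / (16 * M)), lt_min one_pos (by positivity), 1/4, by norm_num, ?_⟩
  intro x₀ hx₀ r hr hrle
  have hr1 : r ≤ 1 := le_trans hrle (min_le_left _ _)
  have hrm : r ≤ m / (16 * M) := le_trans hrle (min_le_right _ _)
  have h16 : 16 * M * r ≤ m := by
    rw [le_div_iff₀ (by positivity)] at hrm; linarith [hrm]
  have hx₀R : ‖x₀‖ ≤ R₁ :=
    mem_closedBall_zero_iff.1 (hR₁ (frontier_subset_closure hx₀))
  have hx₀B : x₀ ∈ closedBall (0:Plane) (R₁+1) := by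
    rw [mem_closedBall_zero_iff]; linarith
  have hx₀S : x₀ ∈ S := by rw [hSdef, mem_closedBall_zero_iff]; linarith
  have hG₀ : gradient F x₀ ≠ 0 := hgrad x₀ hx₀
  have hm₀ : m ≤ ‖gradient F x₀‖ := hm x₀ hx₀
  have hG₀n : (0:ℝ) < ‖gradient F x₀‖ := lt_of_lt_of_le hm0 hm₀
  set ν₀ : Plane := outN F x₀ with hν₀def
  have hν₀ : ‖ν₀‖ = 1 := norm_smul_inv_norm (𝕜 := ℝ) hG₀
  have hinner₀ : (inner ℝ (gradient F x₀) ν₀ : ℝ) = ‖gradient F x₀‖ := by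
    rw [hν₀def]
    show (inner ℝ (gradient F x₀) (‖gradient F x₀‖⁻¹ • gradient F x₀) : ℝ) = _
    rw [real_inner_smul_right, real_inner_self_eq_norm_mul_norm]
    field_simp
  set a : Plane := x₀ - (r/2) • ν₀ with hadef
  have haxnorm : ‖a - x₀‖ = r / 2 := by
    rw [hadef]
    have : x₀ - (r/2) • ν₀ - x₀ = -((r/2) • ν₀) := by abel
    rw [this, norm_neg, norm_smul, hν₀, Real.norm_eq_abs, abs_of_pos (by linarith)]
    ring
  have haball : a ∈ ball x₀ r := by
    rw [mem_ball, dist_eq_norm, haxnorm]; linarith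
  -- a is in Ω
  have haΩ : a ∈ Ω := by
    rw [hΩeq]
    show F a < 0
    have haT := hTay x₀ hx₀B a (by rw [haxnorm]; linarith)
    have hax : a - x₀ = -((r/2) • ν₀) := by rw [hadef]; abel
    have hfd : fderiv ℝ F x₀ (a - x₀) = -(r/2) * ‖gradient F x₀‖ := by
      rw [← hGi, hax, inner_neg_right, real_inner_smul_right, hinner₀]; ring
    rw [hF0 x₀ hx₀, hfd, haxnorm, sub_zero] at haT
    have h1 : F a ≤ -(r/2) * ‖gradient F x₀‖ + M * (r/2)^2 := by
      have := abs_le.1 haT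
      linarith [this.2]
    have h2 : M * (r/2)^2 < (r/2) * m := by nlinarith
    nlinarith [hG₀n, hm₀, hr]
  refine ⟨a, ⟨haball, haΩ⟩, ?_, ?_⟩
  -- circular portion
  · intro x hx
    obtain ⟨hxs, -⟩ := hx
    have hxr : ‖x - x₀‖ = r := by
      rw [← dist_eq_norm]; exact mem_sphere.1 hxs
    have hxa : x - a = (x - x₀) + (r/2) • ν₀ := by rw [hadef]; abel
    have hsplit : (inner ℝ (x - a) (r⁻¹ • (x - x₀)) : ℝ)
        = r⁻¹ * ((inner ℝ (x - x₀) (x - x₀) : ℝ) + (r/2) * (inner ℝ ν₀ (x - x₀) : ℝ)) := by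
      rw [hxa, real_inner_smul_right, inner_add_left, real_inner_smul_left]
    have hself : (inner ℝ (x - x₀) (x - x₀) : ℝ) = r^2 := by
      rw [real_inner_self_eq_norm_sq, hxr]
    have hcs : |(inner ℝ ν₀ (x - x₀) : ℝ)| ≤ r := by
      calc |(inner ℝ ν₀ (x - x₀) : ℝ)| ≤ ‖ν₀‖ * ‖x - x₀‖ := abs_real_inner_le_norm _ _
        _ = r := by rw [hν₀, hxr, one_mul]
    rw [hsplit, hself, inv_mul_eq_div, le_div_iff₀ hr]
    nlinarith [abs_le.1 hcs]
  -- flat portion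
  · intro x hx
    obtain ⟨hxb, hxf⟩ := hx
    have hd : ‖x - x₀‖ ≤ r := by
      rw [← dist_eq_norm]; exact mem_closedBall.1 hxb
    have hd0 : (0:ℝ) ≤ ‖x - x₀‖ := norm_nonneg _
    have hGx : gradient F x ≠ 0 := hgrad x hxf
    have hmx : m ≤ ‖gradient F x‖ := hm x hxf
    have hxS : x ∈ S := by
      rw [hSdef, mem_closedBall_zero_iff]
      calc ‖x‖ = ‖x - x₀ + x₀‖ := by rw [sub_add_cancel]
        _ ≤ ‖x - x₀‖ + ‖x₀‖ := norm_add_le _ _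
        _ ≤ R₁ + 2 := by linarith
    set ν : Plane := outN F x with hνdef
    have hνn : ‖ν‖ = 1 := norm_smul_inv_norm (𝕜 := ℝ) hGx
    -- difference of normals
    have hGd : ‖gradient F x - gradient F x₀‖ ≤ M * ‖x - x₀‖ := hGlip x₀ hx₀S x hxS
    have hνdiff : ‖ν - ν₀‖ ≤ 2 * (M * r) / m := by
      calc ‖ν - ν₀‖ ≤ 2 * ‖gradient F x - gradient F x₀‖ / m :=
            unit_diff_le _ _ hm0 hmx hm₀
        _ ≤ 2 * (M * r) / m := by
            gcongr
            calc ‖gradient F x - gradient F x₀‖ ≤ M * ‖x - x₀‖ := hGd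
              _ ≤ M * r := by nlinarith
    -- Taylor at x₀ evaluated at x
    have hTx : |(inner ℝ (x - x₀) (gradient F x₀) : ℝ)| ≤ M * r ^ 2 := by
      have hT := hTay x₀ hx₀B x (le_trans hd hr1)
      rw [hF0 x hxf, hF0 x₀ hx₀, sub_zero, zero_sub, abs_neg, ← hGi] at hT
      rw [real_inner_comm]
      calc |(inner ℝ (gradient F x₀) (x - x₀) : ℝ)| ≤ M * ‖x - x₀‖ ^ 2 := hT
        _ ≤ M * r ^ 2 :=
          mul_le_mul_of_nonneg_left (pow_le_pow_left₀ hd0 hd 2) (le_of_lt hM0)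
    -- the three inner product bounds
    have hI1 : -(M * r^2 / m) ≤ (inner ℝ (x - x₀) ν₀ : ℝ) := by
      have heq : (inner ℝ (x - x₀) ν₀ : ℝ)
          = ‖gradient F x₀‖⁻¹ * (inner ℝ (x - x₀) (gradient F x₀) : ℝ) := by
        rw [hν₀def]
        show (inner ℝ (x - x₀) (‖gradient F x₀‖⁻¹ • gradient F x₀) : ℝ) = _
        rw [real_inner_smul_right]
      have habs : |(inner ℝ (x - x₀) ν₀ : ℝ)| ≤ M * r^2 / m := by
        rw [heq, abs_mul, abs_of_pos (inv_pos.2 hG₀n)]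
        calc ‖gradient F x₀‖⁻¹ * |(inner ℝ (x - x₀) (gradient F x₀) : ℝ)|
            ≤ m⁻¹ * (M * r^2) :=
              mul_le_mul (inv_anti₀ hm0 hm₀) hTx (abs_nonneg _)
                (le_of_lt (inv_pos.2 hm0))
          _ = M * r^2 / m := by rw [inv_mul_eq_div]
      linarith [neg_abs_le (inner ℝ (x - x₀) ν₀ : ℝ), abs_le.1 habs]
    have hI2 : -(2 * (M * r^2 / m)) ≤ (inner ℝ (x - x₀) (ν - ν₀) : ℝ) := by
      have habs : |(inner ℝ (x - x₀) (ν - ν₀) : ℝ)| ≤ 2 * (M * r^2 / m) := by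
        calc |(inner ℝ (x - x₀) (ν - ν₀) : ℝ)| ≤ ‖x - x₀‖ * ‖ν - ν₀‖ :=
              abs_real_inner_le_norm _ _
          _ ≤ r * (2 * (M * r) / m) := by
              apply mul_le_mul hd hνdiff (norm_nonneg _) (by linarith)
          _ = 2 * (M * r^2 / m) := by ring
      linarith [abs_le.1 habs]
    have hI3 : -(2 * M * r / m) ≤ (inner ℝ ν₀ (ν - ν₀) : ℝ) := by
      have habs : |(inner ℝ ν₀ (ν - ν₀) : ℝ)| ≤ 2 * M * r / m := by
        calc |(inner ℝ ν₀ (ν - ν₀) : ℝ)| ≤ ‖ν₀‖ * ‖ν - ν₀‖ := abs_real_inner_le_norm _ _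
          _ = ‖ν - ν₀‖ := by rw [hν₀, one_mul]
          _ ≤ 2 * (M * r) / m := hνdiff
          _ = 2 * M * r / m := by ring
      linarith [abs_le.1 habs]
    -- assemble
    have hxa : x - a = (x - x₀) + (r/2) • ν₀ := by rw [hadef]; abel
    have hνself : (inner ℝ ν₀ ν₀ : ℝ) = 1 := by
      rw [real_inner_self_eq_norm_mul_norm, hν₀]; norm_num
    have hsplit : (inner ℝ (x - a) ν : ℝ)
        = (inner ℝ (x - x₀) ν₀ : ℝ) + (inner ℝ (x - x₀) (ν - ν₀) : ℝ)
          + (r/2) * (1 + (inner ℝ ν₀ (ν - ν₀) : ℝ)) := by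
      rw [hxa, inner_add_left, real_inner_smul_left, inner_sub_right, inner_sub_right,
        hνself]
      ring
    have hfinal : M * r^2 / m ≤ r / 16 := by
      rw [div_le_div_iff₀ hm0 (by norm_num : (0:ℝ) < 16)]
      nlinarith
    have h8 : -(M * r^2 / m) ≤ (r/2) * (inner ℝ ν₀ (ν - ν₀) : ℝ) := by
      calc -(M * r^2 / m) = (r/2) * (-(2 * M * r / m)) := by ring
        _ ≤ (r/2) * (inner ℝ ν₀ (ν - ν₀) : ℝ) :=
          mul_le_mul_of_nonneg_left hI3 (by linarith : (0:ℝ) ≤ r/2)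
    have hE : (inner ℝ (x - x₀) ν₀ : ℝ) + (inner ℝ (x - x₀) (ν - ν₀) : ℝ)
          + (r/2) * (1 + (inner ℝ ν₀ (ν - ν₀) : ℝ))
        = (inner ℝ (x - x₀) ν₀ : ℝ) + (inner ℝ (x - x₀) (ν - ν₀) : ℝ)
          + r/2 + (r/2) * (inner ℝ ν₀ (ν - ν₀) : ℝ) := by ring
    rw [hsplit, hE]
    generalize (inner ℝ ν₀ (ν - ν₀) : ℝ) = J at h8 ⊢
    generalize (inner ℝ (x - x₀) ν₀ : ℝ) = I1 at hI1 ⊢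
    generalize (inner ℝ (x - x₀) (ν - ν₀) : ℝ) = I2 at hI2 ⊢
    linarith [hI1, hI2, h8, hfinal]
end
end

section
/- Let Ω ⊂ ℝ² be a bounded smooth domain. Then there exist r₀ = r₀(∂Ω) > 0 and C₀ = C₀(∂Ω) > 0 such that for every x₀ ∈ ∂Ω there is a smooth vector field X ∈ C^∞(B_{r₀}(x₀), ℝ²) satisfying: (i) X·ν = 0 on T_{r₀}(x₀) = B_{r₀}(x₀) ∩ ∂Ω, where ν is the outward unit normal of ∂Ω; (ii) |X(x) − (x − x₀)| ≤ C₀ |x − x₀|² for all x ∈ B_{r₀}(x₀); (iii) |∇X(x) − I₂| ≤ 2C₀ |x − x₀| for all x ∈ B_{r₀}(x₀), where I₂ is the 2×2 identity matrix. -/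
open MeasureTheory Metric Filter Topology
open scoped ENNReal Topology

noncomputable section

variable {L : ℕ}

open scoped RealInnerProductSpace

private lemma frontier_F_eq_zero {Ω : Set Plane} {F : Plane → ℝ}
    (hopen : IsOpen Ω) (hF : Continuous F) (hΩF : Ω = {x | F x < 0}) :
    ∀ y ∈ frontier Ω, F y = 0 := by
  intro y hy
  rw [hopen.frontier_eq] at hy
  have h1 : F y ≤ 0 := by
    have : closure Ω ⊆ {x | F x ≤ 0} := by
      apply closure_minimal _ (isClosed_le hF continuous_const)
      rw [hΩF]; exact fun z hz => show F z ≤ 0 from le_of_lt hz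
    exact this hy.1
  have h2 : ¬ (F y < 0) := by
    intro h; exact hy.2 (by rw [hΩF]; exact h)
  linarith

set_option maxHeartbeats 1000000 in
/-- existence of the boundary-adapted vector field (2.21). -/
theorem boundary_tangential_vector_field
    (Ω : Set Plane) (F : Plane → ℝ) (hΩ : SmoothBdd Ω F) :
    ∃ r₀ > (0:ℝ), ∃ C₀ > (0:ℝ),
      ∀ x₀ ∈ frontier Ω, ∃ X : Plane → Plane,
        ContDiffOn ℝ (⊤ : ℕ∞) X (ball x₀ r₀)
        -- (i) `X · ν = 0` on `T_{r₀}(x₀)`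
        ∧ (∀ x ∈ ball x₀ r₀ ∩ frontier Ω, (inner ℝ (X x) (outN F x) : ℝ) = 0)
        -- (ii) `|X(x) - (x - x₀)| ≤ C₀ |x - x₀|²`
        ∧ (∀ x ∈ ball x₀ r₀, ‖X x - (x - x₀)‖ ≤ C₀ * ‖x - x₀‖ ^ 2)
        -- (iii) `|∇X(x) - I₂| ≤ 2 C₀ |x - x₀|`
        ∧ ∀ x ∈ ball x₀ r₀,
            ‖fderiv ℝ X x - ContinuousLinearMap.id ℝ Plane‖ ≤ 2 * C₀ * ‖x - x₀‖ := by
  obtain ⟨hopen, hbdd, hF, hΩF, hgradne⟩ := hΩ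
  by_cases hSne : (frontier Ω).Nonempty
  swap
  · exact ⟨1, one_pos, 1, one_pos, fun x₀ hx₀ => absurd ⟨x₀, hx₀⟩ hSne⟩
  have hFzero := frontier_F_eq_zero hopen hF.continuous hΩF
  set g : Plane → Plane := fun x => gradient F x with hgdef
  have hgsm : ContDiff ℝ (⊤ : ℕ∞) g :=
    (InnerProductSpace.toDual ℝ Plane).symm.contDiff.comp (hF.fderiv_right (by simp))
  have hFd : Differentiable ℝ F := hF.differentiable (by simp)
  have hFdf : ∀ x, HasFDerivAt F ((InnerProductSpace.toDual ℝ Plane) (g x)) x := fun x =>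
    (hFd x).hasGradientAt.hasFDerivAt
  -- compactness setup
  have hScpt : IsCompact (frontier Ω) :=
    hbdd.isCompact_closure.of_isClosed_subset isClosed_frontier frontier_subset_closure
  set U : Set Plane := {x | g x ≠ 0} with hUdef
  have hUopen : IsOpen U := isOpen_compl_singleton.preimage hgsm.continuous
  obtain ⟨δ, hδpos, hKU⟩ := hScpt.exists_cthickening_subset_open hUopen hgradne
  set K : Set Plane := Metric.cthickening δ (frontier Ω) with hKdef
  have hKcpt : IsCompact K := hScpt.cthickening
  have hKne : K.Nonempty := hSne.mono (Metric.self_subset_cthickening _)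
  -- lower bound on ‖g‖ on K
  obtain ⟨z, hzK, hz⟩ := hKcpt.exists_isMinOn hKne (hgsm.continuous.norm.continuousOn)
  set δ₀ : ℝ := ‖g z‖ with hδ₀def
  have hδ₀pos : 0 < δ₀ := norm_pos_iff.2 (hKU hzK)
  -- bound on second derivatives
  have hg'cont : Continuous (fun x => fderiv ℝ g x) := (hgsm.fderiv_right (m := (⊤ : ℕ∞)) (by simp)).continuous
  obtain ⟨M₂, hM₂⟩ := hKcpt.exists_bound_of_continuousOn hg'cont.continuousOn
  have hM₂0 : 0 ≤ M₂ := le_trans (norm_nonneg _) (hM₂ z hzK)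
  -- the vector field direction W
  set W : Plane → Plane := fun x => (⟪g x, g x⟫)⁻¹ • g x with hWdef
  have hggne : ∀ x ∈ U, ⟪g x, g x⟫ ≠ 0 := fun x hx => by
    rw [real_inner_self_eq_norm_sq]
    exact pow_ne_zero _ (norm_ne_zero_iff.2 hx)
  have hWsm : ContDiffOn ℝ (⊤ : ℕ∞) W U :=
    (((hgsm.inner ℝ hgsm).contDiffOn).inv hggne).smul hgsm.contDiffOn
  have hWdiff : ∀ x ∈ U, DifferentiableAt ℝ W x := fun x hx =>
    (hWsm.differentiableOn (by simp)).differentiableAt (hUopen.mem_nhds hx)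
  have hW'cont : ContinuousOn (fun x => fderiv ℝ W x) U :=
    hWsm.continuousOn_fderiv_of_isOpen hUopen (by simp)
  obtain ⟨MW, hMW⟩ := hKcpt.exists_bound_of_continuousOn (hW'cont.mono hKU)
  have hMW0 : 0 ≤ MW := le_trans (norm_nonneg _) (hMW z hzK)
  have hWnorm : ∀ x ∈ K, ‖W x‖ ≤ δ₀⁻¹ := by
    intro x hx
    have hgx : g x ≠ 0 := hKU hx
    have : ‖W x‖ = ‖g x‖⁻¹ := by
      rw [hWdef]; simp only [norm_smul, real_inner_self_eq_norm_sq]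
      rw [norm_inv, Real.norm_of_nonneg (by positivity), sq]
      field_simp
    rw [this]
    exact inv_anti₀ hδ₀pos ((isMinOn_iff.1 hz) x hx)
  -- constants
  refine ⟨δ, hδpos, M₂ * δ₀⁻¹ + M₂ * δ * MW + 1, by positivity, ?_⟩
  set C₀ : ℝ := M₂ * δ₀⁻¹ + M₂ * δ * MW + 1 with hC₀def
  intro x₀ hx₀
  have hballK : Metric.ball x₀ δ ⊆ K := fun y hy =>
    Metric.closedBall_subset_cthickening hx₀ δ (Metric.ball_subset_closedBall hy)
  have hballU : Metric.ball x₀ δ ⊆ U := fun y hy => hKU (hballK hy)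
  -- the correction function G and its derivative D
  set G : Plane → ℝ := fun y => ⟪g y, y - x₀⟫ - F y + F x₀ with hGdef
  set D : Plane → (Plane →L[ℝ] ℝ) :=
    fun y => (innerSL ℝ (y - x₀)).comp (fderiv ℝ g y) with hDdef
  have hGD : ∀ y, HasFDerivAt G (D y) y := by
    intro y
    have h1 : HasFDerivAt (fun t => ⟪g t, t - x₀⟫)
        ((fderivInnerCLM ℝ (g y, y - x₀)).comp
          ((fderiv ℝ g y).prod (ContinuousLinearMap.id ℝ Plane))) y :=
      (hgsm.differentiable (by simp) y).hasFDerivAt.inner ℝ ((hasFDerivAt_id y).sub_const x₀)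
    have h2 := (h1.sub (hFdf y)).add_const (F x₀)
    have heq : (fderivInnerCLM ℝ (g y, y - x₀)).comp
          ((fderiv ℝ g y).prod (ContinuousLinearMap.id ℝ Plane))
          - (InnerProductSpace.toDual ℝ Plane) (g y) = D y := by
      ext v
      simp [fderivInnerCLM_apply, hDdef, InnerProductSpace.toDual_apply_apply,
        real_inner_comm]
      rw [inner_sub_left]
    rw [heq] at h2
    exact h2
  have hDnorm : ∀ y ∈ K, ‖D y‖ ≤ M₂ * ‖y - x₀‖ := by
    intro y hy
    calc ‖D y‖ ≤ ‖innerSL ℝ (y - x₀)‖ * ‖fderiv ℝ g y‖ :=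
          ContinuousLinearMap.opNorm_comp_le _ _
      _ = ‖y - x₀‖ * ‖fderiv ℝ g y‖ := by rw [innerSL_apply_norm]
      _ ≤ ‖y - x₀‖ * M₂ := mul_le_mul_of_nonneg_left (hM₂ y hy) (norm_nonneg _)
      _ = M₂ * ‖y - x₀‖ := mul_comm _ _
  have hGx₀ : G x₀ = 0 := by simp [hGdef]
  have hGquad : ∀ x ∈ Metric.ball x₀ δ, |G x| ≤ M₂ * ‖x - x₀‖ ^ 2 := by
    intro x hx
    have hxδ : ‖x - x₀‖ < δ := by rwa [Metric.mem_ball, dist_eq_norm] at hx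
    have hsub : Metric.closedBall x₀ ‖x - x₀‖ ⊆ K := by
      refine subset_trans (Metric.closedBall_subset_cthickening hx₀ _) ?_
      exact Metric.cthickening_mono (le_of_lt hxδ) _
    have key := (convex_closedBall x₀ ‖x - x₀‖).norm_image_sub_le_of_norm_fderiv_le
      (f := G) (C := M₂ * ‖x - x₀‖)
      (fun y _ => (hGD y).differentiableAt)
      (fun y hy => by
        rw [(hGD y).fderiv]
        refine le_trans (hDnorm y (hsub hy)) ?_
        have : ‖y - x₀‖ ≤ ‖x - x₀‖ := by
          rwa [Metric.mem_closedBall, dist_eq_norm] at hy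
        exact mul_le_mul_of_nonneg_left this hM₂0)
      (Metric.mem_closedBall_self (norm_nonneg _))
      (by rw [Metric.mem_closedBall, dist_eq_norm])
    rw [hGx₀, sub_zero] at key
    calc |G x| = ‖G x‖ := rfl
      _ ≤ M₂ * ‖x - x₀‖ * ‖x - x₀‖ := key
      _ = M₂ * ‖x - x₀‖ ^ 2 := by ring
  -- the vector field
  refine ⟨fun y => (y - x₀) - G y • W y, ?_, ?_, ?_, ?_⟩
  · -- smoothness
    exact ((contDiff_id.sub contDiff_const).contDiffOn).sub
      ((((hgsm.inner ℝ (contDiff_id.sub contDiff_const)).sub hF).add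
        contDiff_const).contDiffOn.smul (hWsm.mono hballU))
  · -- (i) tangency
    rintro x ⟨hxb, hxf⟩
    have hgx : g x ≠ 0 := hgradne x hxf
    have hFx : F x = 0 := hFzero x hxf
    have hFx₀ : F x₀ = 0 := hFzero x₀ hx₀
    show ⟪(x - x₀) - G x • W x, ‖g x‖⁻¹ • g x⟫ = 0
    rw [real_inner_smul_right, inner_sub_left, real_inner_smul_left]
    have hWg : ⟪W x, g x⟫ = 1 := by
      rw [hWdef]; simp only [real_inner_smul_left]
      exact inv_mul_cancel₀ (hggne x (hballU hxb))
    rw [hWg, mul_one]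
    have : ⟪x - x₀, g x⟫ = ⟪g x, x - x₀⟫ := real_inner_comm _ _
    rw [this, hGdef]
    simp [hFx, hFx₀]
  · -- (ii) closeness
    intro x hx
    have hxδ : ‖x - x₀‖ < δ := by rwa [Metric.mem_ball, dist_eq_norm] at hx
    have h1 : ‖(x - x₀) - G x • W x - (x - x₀)‖ = |G x| * ‖W x‖ := by
      rw [sub_sub_cancel_left, norm_neg, norm_smul, Real.norm_eq_abs]
    rw [h1]
    calc |G x| * ‖W x‖ ≤ (M₂ * ‖x - x₀‖ ^ 2) * δ₀⁻¹ :=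
          mul_le_mul (hGquad x hx) (hWnorm x (hballK hx)) (norm_nonneg _) (by positivity)
      _ = (M₂ * δ₀⁻¹) * ‖x - x₀‖ ^ 2 := by ring
      _ ≤ C₀ * ‖x - x₀‖ ^ 2 := by
          apply mul_le_mul_of_nonneg_right _ (by positivity)
          rw [hC₀def]
          nlinarith [mul_nonneg (mul_nonneg hM₂0 hδpos.le) hMW0]
  · -- (iii) derivative closeness
    intro x hx
    have hxδ : ‖x - x₀‖ < δ := by rwa [Metric.mem_ball, dist_eq_norm] at hx
    have hxU : x ∈ U := hballU hx
    have hxK : x ∈ K := hballK hx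
    have hD1 : HasFDerivAt (fun y => (y - x₀) - G y • W y)
        (ContinuousLinearMap.id ℝ Plane
          - (G x • fderiv ℝ W x + (D x).smulRight (W x))) x :=
      ((hasFDerivAt_id x).sub_const x₀).sub ((hGD x).smul (hWdiff x hxU).hasFDerivAt)
    rw [hD1.fderiv, sub_sub_cancel_left, norm_neg]
    have hb1 : ‖G x • fderiv ℝ W x‖ ≤ M₂ * ‖x - x₀‖ ^ 2 * MW := by
      rw [norm_smul, Real.norm_eq_abs]
      exact mul_le_mul (hGquad x hx) (hMW x hxK) (norm_nonneg _) (by positivity)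
    have hb2 : ‖(D x).smulRight (W x)‖ ≤ (M₂ * ‖x - x₀‖) * δ₀⁻¹ := by
      rw [ContinuousLinearMap.norm_smulRight_apply]
      exact mul_le_mul (hDnorm x hxK) (hWnorm x hxK) (norm_nonneg _)
        (by positivity)
    calc ‖G x • fderiv ℝ W x + (D x).smulRight (W x)‖
        ≤ ‖G x • fderiv ℝ W x‖ + ‖(D x).smulRight (W x)‖ := norm_add_le _ _
      _ ≤ M₂ * ‖x - x₀‖ ^ 2 * MW + (M₂ * ‖x - x₀‖) * δ₀⁻¹ := add_le_add hb1 hb2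
      _ ≤ 2 * C₀ * ‖x - x₀‖ := by
          rw [hC₀def]
          have h0 : 0 ≤ ‖x - x₀‖ := norm_nonneg _
          have hi : (0:ℝ) ≤ δ₀⁻¹ := inv_nonneg.2 hδ₀pos.le
          nlinarith [mul_le_mul_of_nonneg_left (le_of_lt hxδ)
            (mul_nonneg (mul_nonneg hM₂0 h0) hMW0),
            mul_nonneg (mul_nonneg hM₂0 hi) h0,
            mul_nonneg (mul_nonneg (mul_nonneg hM₂0 hδpos.le) hMW0) h0, h0]
end
end
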